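/- arXiv:1507.01392 — 2 statements merged into one kernel-verified Lean document; each statement's English description precedes it below -/
import Mathlib

section
/- Let g : R⁴ → R be smooth in (N,C,D,τ) with g(0)=0, ∂g/∂τ(0)=1/2, and set n=g_N(0), c=g_C(0), d=g_D(0). Suppose (N(t),C(t),D(t),τ(t)) is a smooth curve through 0 solving N = t·g_N, C = −t·g_C, D = −t·g_D along with the equations of Lemma 5.4. Then for small t ≠ 0, N² − C² − D² = (g_N² − g_C² − g_D²) t² which is positive for all small t ≠ 0 if n² > c² + d², and negative if n² < c² + d². -/
/-- along a smooth solution curve with `N = t g_N`, `C = −t g_C`,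
`D = −t g_D`, one has `N² − C² − D² = (g_N² − g_C² − g_D²) t²`, which is
positive for all small `t ≠ 0` if `n² > c² + d²`, and negative if
`n² < c² + d²`. -/
theorem stmt8 (g : ℝ × ℝ × ℝ × ℝ → ℝ) (hg : ContDiff ℝ (⊤ : ℕ∞) g)
    (gN gC gD : ℝ × ℝ × ℝ × ℝ → ℝ)
    (hgN : ∀ p, gN p = fderiv ℝ g p (1, 0, 0, 0))
    (hgC : ∀ p, gC p = fderiv ℝ g p (0, 1, 0, 0))
    (hgD : ∀ p, gD p = fderiv ℝ g p (0, 0, 1, 0))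
    (hg0 : g 0 = 0)
    (hgτ : fderiv ℝ g 0 (0, 0, 0, 1) = 1 / 2)
    (n c d : ℝ) (hn : n = gN 0) (hc : c = gC 0) (hd : d = gD 0)
    (N C D τ : ℝ → ℝ)
    (hsmooth : ContDiff ℝ (⊤ : ℕ∞) N ∧ ContDiff ℝ (⊤ : ℕ∞) C ∧ ContDiff ℝ (⊤ : ℕ∞) D ∧ ContDiff ℝ (⊤ : ℕ∞) τ)
    (h0 : N 0 = 0 ∧ C 0 = 0 ∧ D 0 = 0 ∧ τ 0 = 0)
    (hNt : ∀ t, N t = t * gN (N t, C t, D t, τ t))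
    (hCt : ∀ t, C t = -(t * gC (N t, C t, D t, τ t)))
    (hDt : ∀ t, D t = -(t * gD (N t, C t, D t, τ t))) :
    (∀ t, N t ^ 2 - C t ^ 2 - D t ^ 2 =
        (gN (N t, C t, D t, τ t) ^ 2 - gC (N t, C t, D t, τ t) ^ 2 -
          gD (N t, C t, D t, τ t) ^ 2) * t ^ 2) ∧
    (n ^ 2 > c ^ 2 + d ^ 2 → ∃ ε > (0 : ℝ), ∀ t : ℝ, t ≠ 0 → |t| < ε →
        N t ^ 2 - C t ^ 2 - D t ^ 2 > 0) ∧
    (n ^ 2 < c ^ 2 + d ^ 2 → ∃ ε > (0 : ℝ), ∀ t : ℝ, t ≠ 0 → |t| < ε →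
        N t ^ 2 - C t ^ 2 - D t ^ 2 < 0) := by
  obtain ⟨hN, hC, hD, hτ⟩ := hsmooth
  obtain ⟨hN0, hC0, hD0, hτ0⟩ := h0
  set X : ℝ → ℝ × ℝ × ℝ × ℝ := fun t => (N t, C t, D t, τ t) with hX
  have hXcont : Continuous X :=
    (hN.continuous.prodMk (hC.continuous.prodMk (hD.continuous.prodMk hτ.continuous)))
  have hX0 : X 0 = 0 := by simp [hX, hN0, hC0, hD0, hτ0]
  have hfd : Continuous (fun p => fderiv ℝ g p) := hg.continuous_fderiv (by simp)
  have hcont : ∀ v : ℝ × ℝ × ℝ × ℝ, Continuous (fun t => fderiv ℝ g (X t) v) :=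
    fun v => (hfd.comp hXcont).clm_apply continuous_const
  set F : ℝ → ℝ := fun t => gN (X t) ^ 2 - gC (X t) ^ 2 - gD (X t) ^ 2 with hF
  have hFeq : F = fun t => (fderiv ℝ g (X t) (1,0,0,0)) ^ 2 -
      (fderiv ℝ g (X t) (0,1,0,0)) ^ 2 - (fderiv ℝ g (X t) (0,0,1,0)) ^ 2 := by
    funext t; simp [hF, hgN, hgC, hgD]
  have hFcont : Continuous F := by
    rw [hFeq]
    exact (((hcont _).pow 2).sub ((hcont _).pow 2)).sub ((hcont _).pow 2)
  have hF0 : F 0 = n ^ 2 - c ^ 2 - d ^ 2 := by simp [hF, hX0, hn, hc, hd]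
  have key : ∀ t, N t ^ 2 - C t ^ 2 - D t ^ 2 = F t * t ^ 2 := by
    intro t
    have h1 : N t ^ 2 = gN (X t) ^ 2 * t ^ 2 := by
      conv_lhs => rw [hNt t]
      ring
    have h2 : C t ^ 2 = gC (X t) ^ 2 * t ^ 2 := by
      conv_lhs => rw [hCt t]
      ring
    have h3 : D t ^ 2 = gD (X t) ^ 2 * t ^ 2 := by
      conv_lhs => rw [hDt t]
      ring
    simp only [hF]
    rw [h1, h2, h3]; ring
  refine ⟨fun t => by rw [key t], ?_, ?_⟩
  · intro h
    have hpos : 0 < F 0 := by rw [hF0]; linarith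
    have hev : ∀ᶠ t in nhds (0:ℝ), 0 < F t :=
      (hFcont.continuousAt).eventually (eventually_gt_nhds hpos)
    rw [Metric.eventually_nhds_iff] at hev
    obtain ⟨ε, hε, hball⟩ := hev
    refine ⟨ε, hε, fun t ht htε => ?_⟩
    have hFt : 0 < F t := hball (by simpa [Real.dist_eq] using htε)
    rw [key t]
    exact mul_pos hFt (by positivity)
  · intro h
    have hneg : F 0 < 0 := by rw [hF0]; linarith
    have hev : ∀ᶠ t in nhds (0:ℝ), F t < 0 :=
      (hFcont.continuousAt).eventually (eventually_lt_nhds hneg)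
    rw [Metric.eventually_nhds_iff] at hev
    obtain ⟨ε, hε, hball⟩ := hev
    refine ⟨ε, hε, fun t ht htε => ?_⟩
    have hFt : F t < 0 := hball (by simpa [Real.dist_eq] using htε)
    rw [key t]
    exact mul_neg_of_neg_of_pos hFt (by positivity)
end

section
/- Suppose L is a real linear Hamiltonian map on a symplectic space (V,ω), S is a linear involution with SL = LS and ω(Sx,Sy) = −ω(x,y), and L has eigenvalues ±i. Then any S-invariant, L-invariant symplectic subspace W ⊆ V on which L has eigenvalues exactly ±i and on which L equals the complex structure determined by ω cannot be 2-dimensional; equivalently, the minimal (L,J,S)-invariant subspace containing an eigenvector for eigenvalue i has dimension 4. -/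
/-!
On `W` the map `S` commutes with `J = L`, so, being an isometry, it preserves
`ω x y = ⟪x, J y⟫`; being anti-symplectic it also reverses `ω`. Hence `ω` vanishes on `W`,
and nondegeneracy forces `W = 0`.
-/

theorem Submodule.eq_bot_of_forall_apply_eq_zero {R M : Type*} [Semiring R] [AddCommMonoid M]
    [Module R M] (ω : M → M → R) (W : Submodule R M)
    (hnondeg : ∀ w ∈ W, w ≠ 0 → ∃ w' ∈ W, ω w w' ≠ 0)
    (hzero : ∀ w ∈ W, ∀ w' ∈ W, ω w w' = 0) : W = ⊥ := by
  rw [Submodule.eq_bot_iff]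
  intro w hw
  by_contra hne
  obtain ⟨w', hw', hω⟩ := hnondeg w hw hne
  exact hω (hzero w hw w' hw')

theorem stmt12_general (m : ℕ)
    (J S L : EuclideanSpace ℝ (Fin m) →ₗ[ℝ] EuclideanSpace ℝ (Fin m))
    (ω : EuclideanSpace ℝ (Fin m) → EuclideanSpace ℝ (Fin m) → ℝ)
    (hω : ∀ x y, ω x y = inner ℝ x (J y))
    (hSiso : ∀ x y, (inner ℝ (S x) (S y) : ℝ) = inner ℝ x y)
    (hSanti : ∀ x y, ω (S x) (S y) = -ω x y)
    (hSL : ∀ x, S (L x) = L (S x))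
    (W : Submodule ℝ (EuclideanSpace ℝ (Fin m)))
    (hSW : ∀ w ∈ W, S w ∈ W)
    (hLJ : ∀ w ∈ W, L w = J w)
    (hWsymp : ∀ w ∈ W, w ≠ 0 → ∃ w' ∈ W, ω w w' ≠ 0) :
    Module.finrank ℝ W ≠ 2 := by
  have hJS : ∀ w ∈ W, J (S w) = S (J w) := fun w hw => by
    rw [← hLJ _ (hSW w hw), ← hSL, hLJ w hw]
  have hω_zero : ∀ w ∈ W, ∀ w' ∈ W, ω w w' = 0 := by
    intro w _ w' hw'
    have hS_preserves : ω (S w) (S w') = ω w w' := by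
      rw [hω, hω, hJS w' hw', hSiso]
    linarith [hSanti w w']
  rw [W.eq_bot_of_forall_apply_eq_zero ω hWsymp hω_zero, finrank_bot]
  norm_num

/-- Lemma 3.1(ii), dimension count: if `S` is an anti-symplectic
linear involution commuting with a linear Hamiltonian map `L`, then an
`S`-invariant, `L`-invariant symplectic subspace `W` on which `L` coincides with
the complex structure `J` cannot be 2-dimensional. -/
theorem stmt12 (m : ℕ)
    (J S L : EuclideanSpace ℝ (Fin m) →ₗ[ℝ] EuclideanSpace ℝ (Fin m))
    (ω : EuclideanSpace ℝ (Fin m) → EuclideanSpace ℝ (Fin m) → ℝ)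
    (hω : ∀ x y, ω x y = inner ℝ x (J y))
    (hJsq : ∀ x, J (J x) = -x)
    (hJskew : ∀ x y, (inner ℝ (J x) y : ℝ) = -(inner ℝ x (J y) : ℝ))
    (hSinv : ∀ x, S (S x) = x)
    (hSiso : ∀ x y, (inner ℝ (S x) (S y) : ℝ) = inner ℝ x y)
    (hSanti : ∀ x y, ω (S x) (S y) = -ω x y)
    (hLham : ∀ x y, ω (L x) y + ω x (L y) = 0)
    (hSL : ∀ x, S (L x) = L (S x))
    (W : Submodule ℝ (EuclideanSpace ℝ (Fin m)))
    (hSW : ∀ w ∈ W, S w ∈ W)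
    (hLW : ∀ w ∈ W, L w ∈ W)
    (hLJ : ∀ w ∈ W, L w = J w)
    (hWsymp : ∀ w ∈ W, w ≠ 0 → ∃ w' ∈ W, ω w w' ≠ 0) :
    Module.finrank ℝ W ≠ 2 :=
  stmt12_general m J S L ω hω hSiso hSanti hSL W hSW hLJ hWsymp
end
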